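/- Let p be a prime and let k, n, m, s be natural numbers with k ≤ n, k ≤ m, and k ≤ s. Then, in ℚ_p, the sequence N ↦ (1/p^N) · ∑_{x=0}^{p^N − 1} B_{k,n}(x) · B_{k,m}(x) · B_{k,s}(x) tends (as N → ∞) to the rational number C(n,k) C(m,k) C(s,k) · ∑_{l=0}^{n+m+s−3k} C(n+m+s−3k, l) (−1)^l B_{3k+l}, cast into ℚ_p. (Equivalently, ∫_{ℤ_p} B_{k,n}(x) B_{k,m}(x) B_{k,s}(x) dμ₁(x) = C(n,k)C(m,k)C(s,k) ∑_{l=0}^{n+m+s−3k} C(n+m+s−3k,l)(−1)^l B_{3k+l}.) -/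

import Mathlib

/-!
The product of the three Bernstein polynomials is `C(n,k) C(m,k) C(s,k) x^{3k} (1 - x)^M` with
`M = n + m + s - 3k`; expanding `(1 - x)^M` reduces the claim, by linearity, to monomials. By
Faulhaber's formula `p^{-N} ∑_{x < p^N} x^j` is a polynomial in `p^N` with constant term `B_j`, and
`p^N → 0` in `ℚ_p`.
-/

open Filter Finset Topology

lemma sum_range_pow_div (n j : ℕ) (hn : n ≠ 0) :
    (∑ x ∈ range n, (x : ℚ) ^ j) / n =
      ∑ i ∈ range (j + 1), bernoulli i * (j + 1).choose i / (j + 1) * (n : ℚ) ^ (j - i) := by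
  rw [sum_range_pow, sum_div]
  refine sum_congr rfl fun i hi => ?_
  rw [show j + 1 - i = j - i + 1 by have := mem_range.mp hi; omega, pow_succ]
  field_simp

section

variable (p : ℕ) [Fact p.Prime]

noncomputable def volkenbornSum (f : ℕ → ℚ_[p]) (N : ℕ) : ℚ_[p] :=
  1 / (p : ℚ_[p]) ^ N * ∑ x ∈ range (p ^ N), f x

lemma volkenbornSum_finset_sum {ι : Type*} (t : Finset ι) (c : ι → ℚ_[p])
    (g : ι → ℕ → ℚ_[p]) (N : ℕ) :
    volkenbornSum p (fun x => ∑ l ∈ t, c l * g l x) N = ∑ l ∈ t, c l * volkenbornSum p (g l) N := by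
  simp only [volkenbornSum, mul_sum]
  rw [sum_comm]
  exact sum_congr rfl fun _ _ => sum_congr rfl fun _ _ => by ring

lemma volkenbornSum_pow (j N : ℕ) :
    volkenbornSum p (fun x => (x : ℚ_[p]) ^ j) N =
      ∑ i ∈ range (j + 1), ((bernoulli i * (j + 1).choose i / (j + 1) : ℚ) : ℚ_[p]) *
        ((p : ℚ_[p]) ^ N) ^ (j - i) := by
  have h := congrArg (fun q : ℚ => (q : ℚ_[p])) (sum_range_pow_div (p ^ N) j
    (pow_ne_zero _ (Fact.out : p.Prime).ne_zero))
  push_cast at h ⊢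
  rw [volkenbornSum, ← h]
  ring

lemma tendsto_volkenbornSum_pow (j : ℕ) :
    Tendsto (volkenbornSum p fun x => (x : ℚ_[p]) ^ j) atTop (𝓝 (bernoulli j : ℚ_[p])) := by
  simp only [funext (volkenbornSum_pow p j)]
  have hp : Tendsto (fun N : ℕ => (p : ℚ_[p]) ^ N) atTop (𝓝 0) :=
    tendsto_pow_atTop_nhds_zero_of_norm_lt_one Padic.norm_p_lt_one
  have hcont : Continuous fun t : ℚ_[p] => ∑ i ∈ range (j + 1),
      ((bernoulli i * (j + 1).choose i / (j + 1) : ℚ) : ℚ_[p]) * t ^ (j - i) := by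
    fun_prop
  have hvalue : ∑ i ∈ range (j + 1),
      ((bernoulli i * (j + 1).choose i / (j + 1) : ℚ) : ℚ_[p]) * 0 ^ (j - i) = bernoulli j := by
    rw [sum_range_succ, sum_eq_zero fun i hi => ?_]
    · rw [Nat.choose_succ_self_right, Nat.sub_self, pow_zero, mul_one, zero_add, Nat.cast_succ,
        mul_div_cancel_right₀ _ (Nat.cast_add_one_ne_zero j)]
    · rw [zero_pow (Nat.sub_ne_zero_of_lt (mem_range.mp hi)), mul_zero]
  rw [← hvalue]
  exact (hcont.tendsto 0).comp hp

lemma tendsto_volkenbornSum_sum_pow {ι : Type*} (t : Finset ι)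
    (c : ι → ℚ_[p]) (e : ι → ℕ) :
    Tendsto (volkenbornSum p fun x => ∑ l ∈ t, c l * (x : ℚ_[p]) ^ e l) atTop
      (𝓝 (∑ l ∈ t, c l * (bernoulli (e l) : ℚ_[p]))) := by
  simp only [funext (volkenbornSum_finset_sum p t c fun l x => (x : ℚ_[p]) ^ e l)]
  exact tendsto_finsetSum _ fun l _ => (tendsto_volkenbornSum_pow p (e l)).const_mul (c l)

end

lemma one_sub_pow_eq_sum {R : Type*} [CommRing R] (x : R) (M : ℕ) :
    (1 - x) ^ M = ∑ l ∈ range (M + 1), M.choose l * (-1) ^ l * x ^ l := by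
  rw [sub_eq_neg_add, add_pow]
  exact sum_congr rfl fun l _ => by rw [one_pow, neg_pow]; ring

lemma bernstein_triple_mul_eq_sum {R : Type*} [CommRing R] (x : R) {n m s k : ℕ}
    (hkn : k ≤ n) (hkm : k ≤ m) (hks : k ≤ s) :
    (n.choose k * x ^ k * (1 - x) ^ (n - k)) * (m.choose k * x ^ k * (1 - x) ^ (m - k)) *
        (s.choose k * x ^ k * (1 - x) ^ (s - k)) =
      ∑ l ∈ range (n + m + s - 3 * k + 1), n.choose k * m.choose k * s.choose k *
        ((n + m + s - 3 * k).choose l * (-1) ^ l) * x ^ (3 * k + l) := by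
  have hM : n + m + s - 3 * k = (n - k) + (m - k) + (s - k) := by omega
  calc _ = n.choose k * m.choose k * s.choose k * x ^ (3 * k) * (1 - x) ^ (n + m + s - 3 * k) := by
        rw [hM]; ring
    _ = _ := by
        rw [one_sub_pow_eq_sum, mul_sum]
        exact sum_congr rfl fun l _ => by ring

/-- `∫_{ℤ_p} B_{k,n}(x) B_{k,m}(x) B_{k,s}(x) dμ₁(x)
    = C(n,k)C(m,k)C(s,k) ∑_{l=0}^{n+m+s−3k} C(n+m+s−3k,l)(−1)^l B_{3k+l}`. -/
theorem volkenborn_bernstein_triple_mul (p : ℕ) [Fact p.Prime] (n m s k : ℕ)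
    (hkn : k ≤ n) (hkm : k ≤ m) (hks : k ≤ s) :
    Filter.Tendsto
      (fun N : ℕ => (1 / (p : ℚ_[p]) ^ N) *
        ∑ x ∈ Finset.range (p ^ N),
          ((n.choose k : ℚ_[p]) * (x : ℚ_[p]) ^ k * (1 - (x : ℚ_[p])) ^ (n - k)) *
          ((m.choose k : ℚ_[p]) * (x : ℚ_[p]) ^ k * (1 - (x : ℚ_[p])) ^ (m - k)) *
          ((s.choose k : ℚ_[p]) * (x : ℚ_[p]) ^ k * (1 - (x : ℚ_[p])) ^ (s - k)))
      Filter.atTop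
      (nhds (((n.choose k : ℚ) * (m.choose k : ℚ) * (s.choose k : ℚ) *
        ∑ l ∈ Finset.range (n + m + s - 3 * k + 1),
          ((n + m + s - 3 * k).choose l : ℚ) * (-1 : ℚ) ^ l *
            bernoulli (3 * k + l) : ℚ) : ℚ_[p])) := by
  have key := tendsto_volkenbornSum_sum_pow p (range (n + m + s - 3 * k + 1))
    (fun l => n.choose k * m.choose k * s.choose k * ((n + m + s - 3 * k).choose l * (-1) ^ l))
    (3 * k + ·)
  simp only [← bernstein_triple_mul_eq_sum _ hkn hkm hks] at key
  convert key using 1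
  · rfl
  · push_cast [mul_sum]
    exact congrArg _ (sum_congr rfl fun l _ => by ring)
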